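/- arXiv:2511.14849 — 2 statements merged into one kernel-verified Lean document; each statement's English description precedes it below -/
import Mathlib

section
/- Let W(·|x) = N(x, N), Q* = N(0, Γ + N), and Y ~ W(·|x) for a fixed x ∈ ℝ. Then Var(log(W(Y|x)/Q*(Y))) = (Γ² + 2x²N)/(2(N + Γ)²). -/
open MeasureTheory ProbabilityTheory Real
open scoped NNReal

/-!
With `s = Γ + N`, the log-likelihood ratio is a quadratic polynomial in the centred output
`Z = Y - x ~ N(0, N)`, namely `a Z² + b Z + const` with `a = 1/(2s) - 1/(2N)` and `b = x/s`.
Since `E Z = E Z³ = 0`, `E Z² = N` and `E Z⁴ = 3N²` (read off the moment generating function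
`exp (N t² / 2)`), its variance is `a² Var Z² + b² Var Z = 2 a² N² + b² N`, the cross term
vanishing because `Cov (Z², Z) = E Z³ = 0`.
-/

lemma deriv_mul_exp_mul_sq_div_two (c : ℝ) {f f' : ℝ → ℝ} (hf : ∀ t, HasDerivAt f (f' t) t) :
    deriv (fun t ↦ f t * rexp (c * t ^ 2 / 2))
      = fun t ↦ (f' t + c * t * f t) * rexp (c * t ^ 2 / 2) := by
  ext t
  have he : HasDerivAt (fun t ↦ rexp (c * t ^ 2 / 2)) (rexp (c * t ^ 2 / 2) * (c * t)) t := by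
    convert (((hasDerivAt_pow 2 t).const_mul c).div_const 2).exp using 2
    ring
  rw [((hf t).fun_mul he).deriv]
  ring

lemma iteratedDeriv_three_exp_mul_sq_div_two (c : ℝ) :
    iteratedDeriv 3 (fun t ↦ rexp (c * t ^ 2 / 2))
      = fun t ↦ (3 * c ^ 2 * t + c ^ 3 * t ^ 3) * rexp (c * t ^ 2 / 2) := by
  have h₁ : deriv (fun t ↦ rexp (c * t ^ 2 / 2)) = fun t ↦ c * t * rexp (c * t ^ 2 / 2) := by
    simpa using deriv_mul_exp_mul_sq_div_two c (fun t ↦ hasDerivAt_const t (1 : ℝ))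
  have h₂ : deriv (fun t ↦ c * t * rexp (c * t ^ 2 / 2))
      = fun t ↦ (c + c ^ 2 * t ^ 2) * rexp (c * t ^ 2 / 2) := by
    rw [deriv_mul_exp_mul_sq_div_two c (f' := fun _ ↦ c)
      (fun t ↦ by simpa using (hasDerivAt_id t).const_mul c)]
    ext; ring
  have h₃ : deriv (fun t ↦ (c + c ^ 2 * t ^ 2) * rexp (c * t ^ 2 / 2))
      = fun t ↦ (3 * c ^ 2 * t + c ^ 3 * t ^ 3) * rexp (c * t ^ 2 / 2) := by
    rw [deriv_mul_exp_mul_sq_div_two c (f' := fun t ↦ 2 * c ^ 2 * t)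
      (fun t ↦ by
        simpa [mul_comm, mul_left_comm] using ((hasDerivAt_pow 2 t).const_mul (c ^ 2)).const_add c)]
    ext; ring
  rw [iteratedDeriv_succ, iteratedDeriv_succ, iteratedDeriv_one, h₁, h₂, h₃]

namespace ProbabilityTheory

lemma integral_pow_gaussianReal_zero_eq_iteratedDeriv (v : ℝ≥0) (n : ℕ) :
    ∫ z, z ^ n ∂gaussianReal 0 v = iteratedDeriv n (fun t ↦ rexp (v * t ^ 2 / 2)) 0 := by
  have h := iteratedDeriv_mgf_zero (X := fun z ↦ z) (μ := gaussianReal 0 v) (by simp) n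
  rw [mgf_fun_id_gaussianReal] at h
  simpa using h.symm

lemma integral_pow_three_gaussianReal_zero (v : ℝ≥0) : ∫ z, z ^ 3 ∂gaussianReal 0 v = 0 := by
  simp [integral_pow_gaussianReal_zero_eq_iteratedDeriv, iteratedDeriv_three_exp_mul_sq_div_two]

lemma integral_pow_four_gaussianReal_zero (v : ℝ≥0) :
    ∫ z, z ^ 4 ∂gaussianReal 0 v = 3 * (v : ℝ) ^ 2 := by
  rw [integral_pow_gaussianReal_zero_eq_iteratedDeriv, iteratedDeriv_succ,
    iteratedDeriv_three_exp_mul_sq_div_two, deriv_mul_exp_mul_sq_div_two _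
      (f' := fun t ↦ 3 * (v : ℝ) ^ 2 + 3 * (v : ℝ) ^ 3 * t ^ 2)]
  · simp
  · intro t
    refine (((hasDerivAt_id' t).const_mul (3 * (v : ℝ) ^ 2)).fun_add
      ((hasDerivAt_pow 3 t).const_mul ((v : ℝ) ^ 3))).congr_deriv ?_
    push_cast
    ring

lemma variance_quadratic_gaussianReal_zero (v : ℝ≥0) (a b : ℝ) :
    Var[fun z ↦ a * z ^ 2 + b * z; gaussianReal 0 v] = 2 * a ^ 2 * v ^ 2 + b ^ 2 * v := by
  have hexp : 0 ∈ interior (integrableExpSet (fun z ↦ z) (gaussianReal 0 v)) := by simp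
  have hZ : MemLp (fun z : ℝ ↦ z) 2 (gaussianReal 0 v) :=
    memLp_of_mem_interior_integrableExpSet hexp 2
  have hZ2 : MemLp (fun z : ℝ ↦ z ^ 2) 2 (gaussianReal 0 v) := by
    refine (memLp_two_iff_integrable_sq (by fun_prop)).2 ?_
    simpa [← pow_mul] using integrable_pow_of_mem_interior_integrableExpSet hexp 4
  have hmean : ∫ z, z ∂gaussianReal 0 v = 0 := integral_id_gaussianReal
  have hsq : ∫ z, z ^ 2 ∂gaussianReal 0 v = v := by
    simpa [variance_eq_sub hZ, hmean] using variance_fun_id_gaussianReal (μ := 0) (v := v)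
  rw [variance_fun_add (hZ2.const_mul a) (hZ.const_mul b), variance_const_mul, variance_const_mul,
    covariance_const_mul_left, covariance_const_mul_right, covariance_eq_sub hZ2 hZ,
    variance_eq_sub hZ2, variance_fun_id_gaussianReal]
  simp only [Pi.mul_apply, Pi.pow_apply, ← pow_succ, ← pow_mul, hmean, hsq,
    integral_pow_three_gaussianReal_zero, integral_pow_four_gaussianReal_zero]
  ring

lemma variance_quadratic_gaussianReal (m : ℝ) (v : ℝ≥0) (a b c : ℝ) :
    Var[fun y ↦ a * (y - m) ^ 2 + b * (y - m) + c; gaussianReal m v]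
      = 2 * a ^ 2 * v ^ 2 + b ^ 2 * v := by
  rw [variance_add_const (by fun_prop), ← variance_quadratic_gaussianReal_zero v a b,
    ← sub_self m, ← gaussianReal_map_sub_const, variance_map (by fun_prop) (by fun_prop)]
  rfl

lemma log_gaussianPDFReal {v : ℝ≥0} (hv : v ≠ 0) (m y : ℝ) :
    log (gaussianPDFReal m v y) = -log (2 * π * v) / 2 - (y - m) ^ 2 / (2 * v) := by
  rw [gaussianPDFReal, log_mul (by positivity) (exp_ne_zero _), log_inv, log_exp,
    log_sqrt (by positivity)]
  ring

lemma log_gaussianPDFReal_div {v w : ℝ≥0} (hv : v ≠ 0) (hw : w ≠ 0) (x y : ℝ) :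
    log (gaussianPDFReal x v y / gaussianPDFReal 0 w y)
      = (1 / (2 * w) - 1 / (2 * v)) * (y - x) ^ 2 + x / w * (y - x)
        + (log (w / v) / 2 + x ^ 2 / (2 * w)) := by
  have hv' : (v : ℝ) ≠ 0 := by exact_mod_cast hv
  have hw' : (w : ℝ) ≠ 0 := by exact_mod_cast hw
  rw [log_div (gaussianPDFReal_pos _ _ _ hv).ne' (gaussianPDFReal_pos _ _ _ hw).ne',
    log_gaussianPDFReal hv, log_gaussianPDFReal hw, log_div hw' hv',
    log_mul (by positivity) hv', log_mul (by positivity) hw']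
  field_simp
  ring

end ProbabilityTheory

theorem awgn_llr_variance_general (N Γ : ℝ≥0) (hN : 0 < N) (x : ℝ) :
    variance
        (fun y => Real.log (gaussianPDFReal x N y / gaussianPDFReal 0 (Γ + N) y))
        (gaussianReal x N)
      = ((Γ : ℝ) ^ 2 + 2 * x ^ 2 * N) / (2 * ((N : ℝ) + Γ) ^ 2) := by
  have hΓN : Γ + N ≠ 0 := (hN.trans_le le_add_self).ne'
  simp_rw [log_gaussianPDFReal_div hN.ne' hΓN, variance_quadratic_gaussianReal]
  push_cast
  field_simp
  ring

/-- For the AWGN channel `W(·|x) = N(x, N)` and output distribution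
`Q* = N(0, Γ + N)`, with `Y ~ W(·|x)`,
`Var(log (W(Y|x)/Q*(Y))) = (Γ² + 2 x² N) / (2 (N + Γ)²)`. -/
theorem awgn_llr_variance (N Γ : ℝ≥0) (hN : 0 < N) (hΓ : 0 < Γ) (x : ℝ) :
    variance
        (fun y => Real.log (gaussianPDFReal x N y / gaussianPDFReal 0 (Γ + N) y))
        (gaussianReal x N)
      = ((Γ : ℝ) ^ 2 + 2 * x ^ 2 * N) / (2 * ((N : ℝ) + Γ) ^ 2) :=
  awgn_llr_variance_general N Γ hN x
end

section
/- Fix δ ∈ (0, 1), γ ∈ ℝ, and constants a = r/√(V) and b = C'/√(V) with b > 0 (where V > 0). For α > 0 define f₁^{(α)}(u) = 0 for u ≤ γ and f₁^{(α)}(u) = 1 + α(u − γ) for u > γ. Define G(α) = inf over random variables U with at most 3 support points satisfying E[U] ≤ 0 and E[f₁^{(α)}(U)] ≤ δ of E[Φ(a − bU)], where Φ is the standard normal CDF. Then lim_{α → 0⁺} G(α) = (1 − δ)·Φ(a − bγ). -/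
open MeasureTheory ProbabilityTheory Real Filter
open scoped Topology

noncomputable def stdNormalCDF (t : ℝ) : ℝ :=
  ((gaussianReal 0 1) (Set.Iic t)).toReal

/-!
Lower bound: `f₁^{(α)} ≥ 𝟙_{(γ, ∞)}`, so an admissible `U` has `P(U > γ) ≤ δ`, and since `Φ(a - b·)`
is antitone and nonnegative, `E[Φ(a - bU)] ≥ P(U ≤ γ) Φ(a - bγ) ≥ (1 - δ) Φ(a - bγ)`.

Upper bound: put mass `δ / (1 + √α)` at `γ + 1/√α` (where `f₁^{(α)} = 1 + √α`), mass
`1 - δ - α` at `γ`, and the remaining `O(√α)` mass far to the left to make the mean nonpositive.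
Its objective is at most `(1 - δ) Φ(a - bγ) + Φ(a - b(γ + 1/√α)) + α + √α`, and the error
terms vanish as `α → 0⁺` because `b > 0`.
-/

theorem integrable_of_measure_compl_finset_eq_zero {α E : Type*} [MeasurableSpace α]
    [MeasurableSingletonClass α] [NormedAddCommGroup E] {μ : Measure α} [IsFiniteMeasure μ]
    {s : Finset α} (hs : μ (↑s)ᶜ = 0) (g : α → E) : Integrable g μ := by
  rw [← Measure.restrict_eq_self_of_ae_mem (ae_iff.2 hs), ← IntegrableOn,
    ← Set.biUnion_of_singleton (s : Set α), integrableOn_finite_biUnion s.finite_toSet]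
  exact fun x _ => integrableOn_singleton

theorem measureReal_mul_le_integral {α : Type*} [MeasurableSpace α] {μ : Measure α}
    [IsFiniteMeasure μ] {s : Set α} (hs : MeasurableSet s) {c : ℝ} {g : α → ℝ}
    (hg : Integrable g μ) (hle : s.indicator (fun _ => c) ≤ g) :
    μ.real s * c ≤ ∫ x, g x ∂μ := by
  rw [← smul_eq_mul, ← integral_indicator_const c hs]
  exact integral_mono ((integrable_const c).indicator hs) hg hle

section ThreePoint

variable {α : Type*} [MeasurableSpace α]

noncomputable def threePoint (p₁ p₂ p₃ : ℝ) (u₁ u₂ u₃ : α) : Measure α :=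
  ENNReal.ofReal p₁ • Measure.dirac u₁ + ENNReal.ofReal p₂ • Measure.dirac u₂ +
    ENNReal.ofReal p₃ • Measure.dirac u₃

variable {p₁ p₂ p₃ : ℝ} (u₁ u₂ u₃ : α)

theorem isProbabilityMeasure_threePoint (h₁ : 0 ≤ p₁) (h₂ : 0 ≤ p₂) (h₃ : 0 ≤ p₃)
    (hsum : p₁ + p₂ + p₃ = 1) : IsProbabilityMeasure (threePoint p₁ p₂ p₃ u₁ u₂ u₃) := by
  constructor
  simp only [threePoint, Measure.add_apply, Measure.smul_apply, measure_univ, smul_eq_mul,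
    mul_one]
  rw [← ENNReal.ofReal_add h₁ h₂, ← ENNReal.ofReal_add (by positivity) h₃, hsum,
    ENNReal.ofReal_one]

variable [MeasurableSingletonClass α]

theorem integral_threePoint (h₁ : 0 ≤ p₁) (h₂ : 0 ≤ p₂) (h₃ : 0 ≤ p₃) (g : α → ℝ) :
    ∫ x, g x ∂threePoint p₁ p₂ p₃ u₁ u₂ u₃ = p₁ * g u₁ + p₂ * g u₂ + p₃ * g u₃ := by
  have hint (p : ℝ) (u : α) : Integrable g (ENNReal.ofReal p • Measure.dirac u) :=
    (integrable_dirac enorm_lt_top).smul_measure ENNReal.ofReal_ne_top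
  rw [threePoint, integral_add_measure ((hint p₁ u₁).add_measure (hint p₂ u₂)) (hint p₃ u₃),
    integral_add_measure (hint p₁ u₁) (hint p₂ u₂)]
  simp only [integral_smul_measure, integral_dirac, ENNReal.toReal_ofReal h₁,
    ENNReal.toReal_ofReal h₂, ENNReal.toReal_ofReal h₃, smul_eq_mul]

theorem threePoint_compl_eq_zero [DecidableEq α] :
    threePoint p₁ p₂ p₃ u₁ u₂ u₃ (↑({u₁, u₂, u₃} : Finset α))ᶜ = 0 := by
  simp [threePoint]

end ThreePoint

theorem stdNormalCDF_eq_cdf (t : ℝ) : stdNormalCDF t = cdf (gaussianReal 0 1) t :=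
  (cdf_eq_real _ _).symm

theorem stdNormalCDF_nonneg (t : ℝ) : 0 ≤ stdNormalCDF t := by
  rw [stdNormalCDF_eq_cdf]; exact cdf_nonneg _ _

theorem stdNormalCDF_le_one (t : ℝ) : stdNormalCDF t ≤ 1 := by
  rw [stdNormalCDF_eq_cdf]; exact cdf_le_one _ _

theorem monotone_stdNormalCDF : Monotone stdNormalCDF := by
  intro x y h; rw [stdNormalCDF_eq_cdf, stdNormalCDF_eq_cdf]; exact monotone_cdf _ h

theorem tendsto_stdNormalCDF_atBot : Tendsto stdNormalCDF atBot (𝓝 0) :=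
  (tendsto_cdf_atBot _).congr fun t => (stdNormalCDF_eq_cdf t).symm

noncomputable def tailPenalty (γ α u : ℝ) : ℝ := if u ≤ γ then 0 else 1 + α * (u - γ)

theorem indicator_Ioi_le_tailPenalty {γ α : ℝ} (hα : 0 ≤ α) :
    (Set.Ioi γ).indicator (fun _ => 1) ≤ tailPenalty γ α := by
  intro u
  by_cases hu : u ≤ γ
  · simp [tailPenalty, hu]
  · have : 0 ≤ α * (u - γ) := mul_nonneg hα (by linarith [not_le.1 hu])
    simp [tailPenalty, hu, not_le.1 hu, this]

/-- The values `E[Φ(a - bU)]` over the laws of `U` admissible in the definition of `G(α)`. -/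
def objectiveValues (δ γ a b α : ℝ) : Set ℝ :=
  { v : ℝ | ∃ P : Measure ℝ, IsProbabilityMeasure P ∧
    (∃ s : Finset ℝ, s.card ≤ 3 ∧ P (↑s)ᶜ = 0) ∧
    (∫ u, u ∂P) ≤ 0 ∧
    (∫ u, tailPenalty γ α u ∂P) ≤ δ ∧
    v = ∫ u, stdNormalCDF (a - b * u) ∂P }

section Bounds

variable {δ γ a b α : ℝ}

theorem le_of_mem_objectiveValues (hb : 0 ≤ b) (hα : 0 ≤ α) {v : ℝ}
    (hv : v ∈ objectiveValues δ γ a b α) : (1 - δ) * stdNormalCDF (a - b * γ) ≤ v := by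
  obtain ⟨P, hP, ⟨s, -, hs⟩, -, hpen, rfl⟩ := hv
  have hint (g : ℝ → ℝ) : Integrable g P := integrable_of_measure_compl_finset_eq_zero hs g
  have htail : P.real (Set.Ioi γ) ≤ δ := by
    simpa using (measureReal_mul_le_integral measurableSet_Ioi (hint _)
      (indicator_Ioi_le_tailPenalty hα)).trans hpen
  have hbody : 1 - δ ≤ P.real (Set.Iic γ) := by
    rw [← Set.compl_Ioi, measureReal_compl measurableSet_Ioi, probReal_univ]; linarith
  have hstd : (Set.Iic γ).indicator (fun _ => stdNormalCDF (a - b * γ)) ≤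
      fun u => stdNormalCDF (a - b * u) := by
    intro u
    by_cases hu : u ≤ γ
    · simpa [hu] using monotone_stdNormalCDF (by nlinarith : a - b * γ ≤ a - b * u)
    · simp [hu, stdNormalCDF_nonneg]
  calc (1 - δ) * stdNormalCDF (a - b * γ)
      ≤ P.real (Set.Iic γ) * stdNormalCDF (a - b * γ) :=
        mul_le_mul_of_nonneg_right hbody (stdNormalCDF_nonneg _)
    _ ≤ _ := measureReal_mul_le_integral measurableSet_Iic (hint _) hstd

theorem threePoint_mem_objectiveValues {p₁ p₂ p₃ u₁ u₂ u₃ : ℝ} (h₁ : 0 ≤ p₁) (h₂ : 0 ≤ p₂)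
    (h₃ : 0 ≤ p₃) (hsum : p₁ + p₂ + p₃ = 1) (hmean : p₁ * u₁ + p₂ * u₂ + p₃ * u₃ ≤ 0)
    (hpen : p₁ * tailPenalty γ α u₁ + p₂ * tailPenalty γ α u₂ + p₃ * tailPenalty γ α u₃ ≤ δ) :
    p₁ * stdNormalCDF (a - b * u₁) + p₂ * stdNormalCDF (a - b * u₂) +
      p₃ * stdNormalCDF (a - b * u₃) ∈ objectiveValues δ γ a b α := by
  refine ⟨threePoint p₁ p₂ p₃ u₁ u₂ u₃, isProbabilityMeasure_threePoint _ _ _ h₁ h₂ h₃ hsum,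
    ⟨{u₁, u₂, u₃}, Finset.card_le_three, threePoint_compl_eq_zero _ _ _⟩, ?_, ?_, ?_⟩ <;>
    rw [integral_threePoint _ _ _ h₁ h₂ h₃] <;> assumption

theorem exists_mem_objectiveValues_le (hδ : 0 ≤ δ) (hα : 0 < α) (hαδ : α ≤ 1 - δ) :
    ∃ v ∈ objectiveValues δ γ a b α, v ≤ (1 - δ) * stdNormalCDF (a - b * γ) +
      (stdNormalCDF (a - b * (γ + (√α)⁻¹)) + (α + √α)) := by
  set t := √α
  have ht : 0 < t := Real.sqrt_pos.2 hα
  have htt : t * t = α := Real.mul_self_sqrt hα.le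
  set p₁ := δ / (1 + t)
  set p₂ := 1 - δ - α
  set p₃ := α + δ * t / (1 + t)
  have h₁ : 0 ≤ p₁ := by positivity
  have h₂ : 0 ≤ p₂ := by linarith
  have h₃ : 0 < p₃ := by positivity
  have hsum : p₁ + p₂ + p₃ = 1 := by simp only [p₁, p₂, p₃]; field_simp; ring
  have hp₁ : p₁ * (1 + t) = δ := div_mul_cancel₀ δ (by positivity)
  have hp₃ : p₃ ≤ α + t := by
    have : δ * t / (1 + t) ≤ t := by rw [div_le_iff₀ (by positivity)]; nlinarith
    linarith
  set u₃ := min γ (-(p₁ * (γ + t⁻¹) + p₂ * γ) / p₃)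
  have hmean : p₁ * (γ + t⁻¹) + p₂ * γ + p₃ * u₃ ≤ 0 := by
    have := mul_le_mul_of_nonneg_left (min_le_right γ (-(p₁ * (γ + t⁻¹) + p₂ * γ) / p₃)) h₃.le
    rw [mul_div_cancel₀ _ h₃.ne'] at this
    linarith
  have hpen₁ : tailPenalty γ α (γ + t⁻¹) = 1 + t := by
    rw [tailPenalty, if_neg (by simpa using ht), ← htt]; field_simp; ring
  have hpen₃ : tailPenalty γ α u₃ = 0 := if_pos (min_le_left _ _)
  refine ⟨_, threePoint_mem_objectiveValues h₁ h₂ h₃.le hsum hmean ?_, ?_⟩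
  · rw [hpen₁, hpen₃, tailPenalty, if_pos le_rfl]; linarith
  · have hatom₁ : p₁ * stdNormalCDF (a - b * (γ + t⁻¹)) ≤ stdNormalCDF (a - b * (γ + t⁻¹)) :=
      mul_le_of_le_one_left (stdNormalCDF_nonneg _) (by linarith)
    have hatom₂ : p₂ * stdNormalCDF (a - b * γ) ≤ (1 - δ) * stdNormalCDF (a - b * γ) :=
      mul_le_mul_of_nonneg_right (by linarith) (stdNormalCDF_nonneg _)
    have hatom₃ : p₃ * stdNormalCDF (a - b * u₃) ≤ α + t :=
      (mul_le_of_le_one_right h₃.le (stdNormalCDF_le_one _)).trans hp₃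
    linarith

theorem tendsto_stdNormalCDF_sub_mul_inv_sqrt (hb : 0 < b) :
    Tendsto (fun α => stdNormalCDF (a - b * (γ + (√α)⁻¹))) (𝓝[>] 0) (𝓝 0) := by
  have hsqrt : Tendsto (fun α : ℝ => √α) (𝓝[>] 0) (𝓝[>] 0) :=
    tendsto_nhdsWithin_of_tendsto_nhds_of_eventually_within _
      (by simpa using Real.continuous_sqrt.continuousWithinAt.tendsto (x := 0) (s := Set.Ioi 0))
      (eventually_nhdsWithin_of_forall fun _ => Real.sqrt_pos.2)
  have hinv := (tendsto_inv_nhdsGT_zero.comp hsqrt).const_mul_atTop hb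
  refine tendsto_stdNormalCDF_atBot.comp ?_
  exact (tendsto_atBot_add_const_left _ (a - b * γ) (tendsto_neg_atTop_atBot.comp hinv)).congr
    fun _ => by simp only [Function.comp_apply]; ring

end Bounds

/-- Fix `δ ∈ (0,1)`, `γ ∈ ℝ`, `a = r/√V`, `b = C'/√V > 0`.
For `α > 0` let `f₁^{(α)}(u) = 0` for `u ≤ γ` and `1 + α(u − γ)` for `u > γ`, and
`G(α) = inf { E[Φ(a − bU)] : U with ≤ 3 support points, E[U] ≤ 0, E[f₁^{(α)}(U)] ≤ δ }`.
Then `G(α) → (1 − δ)Φ(a − bγ)` as `α → 0⁺`. -/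
theorem excess_cost_limit (δ γ a b : ℝ) (hδ0 : 0 < δ) (hδ1 : δ < 1) (hb : 0 < b)
    (f : ℝ → ℝ → ℝ)
    (hf : ∀ α u, f α u = if u ≤ γ then 0 else 1 + α * (u - γ))
    (G : ℝ → ℝ)
    (hG : ∀ α, 0 < α → G α = sInf { v : ℝ | ∃ P : Measure ℝ,
      IsProbabilityMeasure P ∧
      (∃ s : Finset ℝ, s.card ≤ 3 ∧ P (↑s)ᶜ = 0) ∧
      (∫ u, u ∂P) ≤ 0 ∧
      (∫ u, f α u ∂P) ≤ δ ∧
      v = ∫ u, stdNormalCDF (a - b * u) ∂P }) :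
    Tendsto G (𝓝[>] (0 : ℝ)) (𝓝 ((1 - δ) * stdNormalCDF (a - b * γ))) := by
  obtain rfl : f = tailPenalty γ := funext₂ hf
  set L := (1 - δ) * stdNormalCDF (a - b * γ)
  have hsandwich : ∀ α ∈ Set.Ioc 0 (1 - δ), L ≤ G α ∧
      G α ≤ L + (stdNormalCDF (a - b * (γ + (√α)⁻¹)) + (α + √α)) := by
    rintro α ⟨hα, hαδ⟩
    obtain ⟨v, hv, hvle⟩ := exists_mem_objectiveValues_le (γ := γ) (a := a) (b := b) hδ0.le hα hαδ
    have hlower (w : ℝ) (hw : w ∈ objectiveValues δ γ a b α) : L ≤ w :=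
      le_of_mem_objectiveValues hb.le hα.le hw
    rw [hG α hα]
    exact ⟨le_csInf ⟨v, hv⟩ hlower, (csInf_le ⟨L, hlower⟩ hv).trans hvle⟩
  have herror := (tendsto_stdNormalCDF_sub_mul_inv_sqrt (a := a) (γ := γ) hb).add
    ((continuous_id.add Real.continuous_sqrt).tendsto' 0 0 (by simp) |>.mono_left
      nhdsWithin_le_nhds)
  have hsmall : Set.Ioc 0 (1 - δ) ∈ 𝓝[>] (0 : ℝ) := Ioc_mem_nhdsGT (by linarith)
  refine tendsto_of_tendsto_of_tendsto_of_le_of_le' tendsto_const_nhds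
    (by simpa using tendsto_const_nhds (x := L) |>.add herror) ?_ ?_ <;>
    filter_upwards [hsmall] with α hα
  exacts [(hsandwich α hα).1, (hsandwich α hα).2]
end
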